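/- Let Q be a compact Hausdorff topological quandle that is topologically residually finite, and suppose that every open congruence on Q contains an open congruence that is fully invariant under all continuous endomorphisms. Then every continuous surjective quandle endomorphism of Q is injective (hence a homeomorphism and a quandle automorphism), i.e., Q is Hopfian. -/
import Mathlib


open Quandles

/-- A quandle homomorphism: a map preserving the quandle operation. -/
def IsQdlHom {A B : Type} [Shelf A] [Shelf B] (f : A → B) : Prop :=
  ∀ a b : A, f (a ◃ b) = f a ◃ f b

/-- A congruence on a quandle: an equivalence relation compatible with `◃` and `◃⁻¹`. -/
def IsQdlCong {Q : Type} [Quandle Q] (α : Setoid Q) : Prop :=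
  ∀ a b c d : Q, α.r a b → α.r c d →
    α.r (a ◃ c) (b ◃ d) ∧ α.r (a ◃⁻¹ c) (b ◃⁻¹ d)

/-- A fully invariant congruence: invariant under all quandle endomorphisms. -/
def IsFullyInvariant {Q : Type} [Quandle Q] (α : Setoid Q) : Prop :=
  ∀ f : Q → Q, IsQdlHom f → ∀ a b : Q, α.r a b → α.r (f a) (f b)

/-- A residually finite quandle. -/
def QdlResiduallyFinite (Q : Type) [Quandle Q] : Prop :=
  ∀ a b : Q, a ≠ b → ∃ (F : Type) (_ : Quandle F) (_ : Finite F) (f : Q → F),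
    IsQdlHom f ∧ f a ≠ f b

/-- A topological quandle: the quandle operation is (jointly) continuous and the
action of each element is a homeomorphism (i.e. its inverse `y ◃⁻¹ ·` is continuous). -/
structure IsTopQuandle (Q : Type) [Quandle Q] [TopologicalSpace Q] : Prop where
  continuous_act : Continuous fun p : Q × Q => p.1 ◃ p.2
  continuous_invAct : ∀ y : Q, Continuous fun x : Q => y ◃⁻¹ x
/-- A topologically residually finite quandle: distinct points are separated by a
continuous homomorphism to a finite discrete quandle. -/
def TopResFinite (Q : Type) [Quandle Q] [TopologicalSpace Q] : Prop :=
  ∀ a b : Q, a ≠ b → ∃ (F : Type) (_ : Quandle F) (_ : TopologicalSpace F)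
    (_ : DiscreteTopology F) (_ : Finite F) (f : Q → F),
      IsQdlHom f ∧ Continuous f ∧ f a ≠ f b
theorem hom_invAct' {A B : Type} [Quandle A] [Quandle B] {f : A → B} (hf : IsQdlHom f)
    (a b : A) : f (a ◃⁻¹ b) = f a ◃⁻¹ f b := by
  rw [← Rack.left_cancel (f a), ← hf, Rack.right_inv, Rack.right_inv]

/-- A compact Hausdorff, topologically residually finite topological quandle in which
every open congruence contains a fully invariant open congruence is Hopfian: every
continuous surjective endomorphism is injective. -/
theorem stmt_17 {Q : Type} [Quandle Q] [TopologicalSpace Q] [CompactSpace Q] [T2Space Q]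
    (htq : IsTopQuandle Q)
    (hrf : TopResFinite Q)
    (hfi : ∀ α : Setoid Q, IsQdlCong α → IsOpen {p : Q × Q | α.r p.1 p.2} →
      ∃ ρ : Setoid Q, IsQdlCong ρ ∧ IsOpen {p : Q × Q | ρ.r p.1 p.2} ∧
        (∀ f : Q → Q, IsQdlHom f → Continuous f → ∀ a b : Q, ρ.r a b → ρ.r (f a) (f b)) ∧
        (∀ a b : Q, ρ.r a b → α.r a b))
    (f : Q → Q) (hf : IsQdlHom f) (hfc : Continuous f) (hsurj : Function.Surjective f) :
    Function.Injective f := by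
  intro a b hab
  by_contra hne
  obtain ⟨F, _, _, _, _, g, hg, hgc, hgne⟩ := hrf a b hne
  -- kernel of g as a congruence
  set α : Setoid Q := Setoid.ker g with hα
  have hαr : ∀ x y : Q, α.r x y ↔ g x = g y := fun x y => Iff.rfl
  have hαcong : IsQdlCong α := by
    intro x y c d hxy hcd
    constructor
    · show g (x ◃ c) = g (y ◃ d)
      rw [hg, hg, hxy, hcd]
    · show g (x ◃⁻¹ c) = g (y ◃⁻¹ d)
      rw [hom_invAct' hg, hom_invAct' hg, hxy, hcd]
  have hαopen : IsOpen {p : Q × Q | α.r p.1 p.2} := by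
    have : {p : Q × Q | α.r p.1 p.2} = (fun p : Q × Q => (g p.1, g p.2)) ⁻¹' {q : F × F | q.1 = q.2} := rfl
    rw [this]
    exact (isOpen_discrete _).preimage ((hgc.comp continuous_fst).prodMk (hgc.comp continuous_snd))
  obtain ⟨ρ, hρcong, hρopen, hρinv, hρle⟩ := hfi α hαcong hαopen
  -- classes of ρ are open
  have hclass : ∀ x : Q, IsOpen {y : Q | ρ.r x y} := by
    intro x
    have : {y : Q | ρ.r x y} = (fun y : Q => (x, y)) ⁻¹' {p : Q × Q | ρ.r p.1 p.2} := rfl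
    rw [this]
    exact hρopen.preimage (Continuous.prodMk_right x)
  -- Quotient ρ is finite
  have hfin : Finite (Quotient ρ) := by
    have hcov : (Set.univ : Set Q) ⊆ ⋃ x : Q, {y : Q | ρ.r x y} := by
      intro x _
      exact Set.mem_iUnion.mpr ⟨x, ρ.refl x⟩
    obtain ⟨s, hs⟩ := isCompact_univ.elim_finite_subcover _ (fun x => hclass x) hcov
    have : Function.Surjective (fun x : s => (Quotient.mk ρ x : Quotient ρ)) := by
      intro q
      obtain ⟨y, rfl⟩ := Quotient.exists_rep q
      obtain ⟨x, hx, hxy⟩ := Set.mem_iUnion₂.mp (hs (Set.mem_univ y))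
      exact ⟨⟨x, hx⟩, Quotient.sound hxy⟩
    exact Finite.of_surjective _ this
  -- f induces a map on Quotient ρ
  let fbar : Quotient ρ → Quotient ρ :=
    Quotient.map f (fun x y h => hρinv f hf hfc x y h)
  have hfbar_surj : Function.Surjective fbar := by
    intro q
    obtain ⟨y, rfl⟩ := Quotient.exists_rep q
    obtain ⟨x, rfl⟩ := hsurj y
    exact ⟨Quotient.mk ρ x, rfl⟩
  have hfbar_inj : Function.Injective fbar :=
    Finite.injective_iff_surjective.mpr hfbar_surj
  have : (Quotient.mk ρ a : Quotient ρ) = Quotient.mk ρ b := by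
    apply hfbar_inj
    show Quotient.mk ρ (f a) = Quotient.mk ρ (f b)
    rw [hab]
  exact hgne (hρle a b (Quotient.exact this))
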